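/- In the constrained Lasso setup, suppose ‖γ̂ − Γ̂β*‖_∞ ≤ λ/4, suppose Γ̂ satisfies the Lower-RE condition with curvature α > 0 and tolerance τ > 0, suppose λ ≥ 4 b₁ τ, and suppose additionally 16 d₀ τ ≤ (2/15) α (i.e., α ≥ 120 d₀ τ). Then the minimizer satisfies ‖β̂ − β*‖₂ ≤ 3 λ √d₀ / α and ‖β̂ − β*‖₁ ≤ 4 √d₀ ‖β̂ − β*‖₂ ≤ 12 λ d₀ / α. -/

import Mathlib

open MeasureTheory Matrix Finset

/-- Euclidean (ℓ₂) norm of a vector. -/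
noncomputable def e2 {ι : Type*} [Fintype ι] (v : ι → ℝ) : ℝ :=
  Real.sqrt (∑ i, v i ^ 2)

/-- ℓ₁ norm of a vector. -/
noncomputable def l1 {ι : Type*} [Fintype ι] (v : ι → ℝ) : ℝ := ∑ i, |v i|

/-- The constrained Lasso objective `(1/2)βᵀΓ̂β − ⟨γ̂, β⟩ + λ‖β‖₁`. -/
noncomputable def lassoObj {p : ℕ} (Γ : Matrix (Fin p) (Fin p) ℝ)
    (γ : Fin p → ℝ) (lam : ℝ) (β : Fin p → ℝ) : ℝ :=
  (1 / 2 : ℝ) * (β ⬝ᵥ Γ.mulVec β) - γ ⬝ᵥ β + lam * l1 β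

/-- The Lower-RE condition with curvature `α` and tolerance `τ`. -/
def LowerRE {p : ℕ} (Γ : Matrix (Fin p) (Fin p) ℝ) (α τ : ℝ) : Prop :=
  ∀ θ : Fin p → ℝ, α * e2 θ ^ 2 - τ * l1 θ ^ 2 ≤ θ ⬝ᵥ Γ.mulVec θ

/-!
Write `Δ = βhat - βstar`. Comparing the objective at `βhat` and at `βstar` (with `Γ` symmetric),
bounding the noise term by the oracle inequality and using decomposability of the ℓ₁ norm over
the support `S` gives `ΔᵀΓΔ ≤ (λ/2)‖Δ‖₁ + 2λ(‖Δ_S‖₁ - ‖Δ_Sᶜ‖₁)`. Since `‖Δ‖₁ ≤ 2b₁` and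
`4b₁τ ≤ λ`, the Lower-RE tolerance costs at most `(λ/2)‖Δ‖₁`, so
`α‖Δ‖₂² ≤ 3λ‖Δ_S‖₁ - λ‖Δ_Sᶜ‖₁`. Hence `Δ` lies in the cone `‖Δ_Sᶜ‖₁ ≤ 3‖Δ_S‖₁`, and
Cauchy–Schwarz `‖Δ_S‖₁ ≤ √d₀ ‖Δ‖₂` yields both bounds.
-/

open Real

section Norms

variable {ι : Type*} [Fintype ι]

lemma l1_nonneg (v : ι → ℝ) : 0 ≤ l1 v :=
  sum_nonneg fun i _ => abs_nonneg (v i)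

lemma e2_nonneg (v : ι → ℝ) : 0 ≤ e2 v :=
  sqrt_nonneg _

lemma e2_sq (v : ι → ℝ) : e2 v ^ 2 = ∑ i, v i ^ 2 :=
  sq_sqrt (sum_nonneg fun i _ => sq_nonneg (v i))

lemma l1_sub_le (x y : ι → ℝ) : l1 (x - y) ≤ l1 x + l1 y := by
  rw [l1, l1, l1, ← sum_add_distrib]
  exact sum_le_sum fun i _ => abs_sub (x i) (y i)

lemma l1_eq_sum_add_sum_compl [DecidableEq ι] (S : Finset ι) (v : ι → ℝ) :
    l1 v = ∑ i ∈ S, |v i| + ∑ i ∈ Sᶜ, |v i| :=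
  (sum_add_sum_compl S _).symm

lemma sum_abs_le_sqrt_card_mul_e2 (S : Finset ι) (v : ι → ℝ) :
    ∑ i ∈ S, |v i| ≤ √(#S : ℝ) * e2 v := by
  have hsq : (∑ i ∈ S, |v i|) ^ 2 ≤ #S * e2 v ^ 2 := calc
    (∑ i ∈ S, |v i|) ^ 2 ≤ #S * ∑ i ∈ S, |v i| ^ 2 := sq_sum_le_card_mul_sum_sq
    _ ≤ #S * ∑ i, v i ^ 2 := by
      simp only [sq_abs]
      exact mul_le_mul_of_nonneg_left
        (sum_le_sum_of_subset_of_nonneg (subset_univ S) fun i _ _ => sq_nonneg (v i))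
        (Nat.cast_nonneg _)
    _ = #S * e2 v ^ 2 := by rw [e2_sq]
  rw [← sqrt_sq (e2_nonneg v), ← sqrt_mul (Nat.cast_nonneg _)]
  exact (le_sqrt (sum_nonneg fun i _ => abs_nonneg (v i)) (by positivity)).2 hsq

lemma l1_sub_l1_le_of_eq_zero_off [DecidableEq ι] {S : Finset ι} {y : ι → ℝ}
    (hy : ∀ i ∉ S, y i = 0) (x : ι → ℝ) :
    l1 y - l1 x ≤ ∑ i ∈ S, |(x - y) i| - ∑ i ∈ Sᶜ, |(x - y) i| := by
  have hy_off : ∑ i ∈ Sᶜ, |y i| = 0 :=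
    sum_eq_zero fun i hi => by simp [hy i (mem_compl.1 hi)]
  have h_on : ∑ i ∈ S, |y i| - ∑ i ∈ S, |x i| ≤ ∑ i ∈ S, |(x - y) i| := by
    rw [← sum_sub_distrib]
    exact sum_le_sum fun i _ => by
      simpa only [Pi.sub_apply, abs_sub_comm] using abs_sub_abs_le_abs_sub (y i) (x i)
  have h_off : ∑ i ∈ Sᶜ, |(x - y) i| = ∑ i ∈ Sᶜ, |x i| :=
    sum_congr rfl fun i hi => by simp [hy i (mem_compl.1 hi)]
  rw [l1_eq_sum_add_sum_compl S y, l1_eq_sum_add_sum_compl S x]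
  linarith

lemma dotProduct_le_mul_l1 {u : ι → ℝ} {c : ℝ} (hu : ∀ i, |u i| ≤ c) (v : ι → ℝ) :
    u ⬝ᵥ v ≤ c * l1 v := by
  rw [dotProduct, l1, mul_sum]
  refine sum_le_sum fun i _ => ?_
  calc u i * v i ≤ |u i| * |v i| := abs_mul (u i) (v i) ▸ le_abs_self _
    _ ≤ c * |v i| := mul_le_mul_of_nonneg_right (hu i) (abs_nonneg _)

end Norms

lemma le_div_of_mul_sq_le_mul {α c x : ℝ} (hα : 0 < α) (hc : 0 ≤ c) (hx : 0 ≤ x)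
    (h : α * x ^ 2 ≤ c * x) : x ≤ c / α := by
  rw [le_div_iff₀ hα]
  rcases hx.eq_or_lt with rfl | hx
  · simpa using hc
  · nlinarith

section Lasso

variable {p : ℕ} {Γ : Matrix (Fin p) (Fin p) ℝ}

lemma lassoObj_sub_lassoObj (hΓ : Γ.IsSymm) (γ : Fin p → ℝ) (lam : ℝ) (x y : Fin p → ℝ) :
    lassoObj Γ γ lam x - lassoObj Γ γ lam y =
      1 / 2 * ((x - y) ⬝ᵥ Γ *ᵥ (x - y)) - (γ - Γ *ᵥ y) ⬝ᵥ (x - y)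
        + lam * (l1 x - l1 y) := by
  have hsym : y ⬝ᵥ Γ *ᵥ x = x ⬝ᵥ Γ *ᵥ y := by
    rw [dotProduct_mulVec, ← hΓ.eq, vecMul_transpose, dotProduct_comm, hΓ.eq]
  simp only [lassoObj, mulVec_sub, dotProduct_sub, sub_dotProduct, dotProduct_comm (Γ *ᵥ y)]
  linarith

lemma lasso_basic_inequality (hΓ : Γ.IsSymm) {γ : Fin p → ℝ} {lam : ℝ} (hlam : 0 ≤ lam)
    {S : Finset (Fin p)} {βstar βhat : Fin p → ℝ} (hS : ∀ i ∉ S, βstar i = 0)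
    (horacle : ∀ i, |γ i - (Γ *ᵥ βstar) i| ≤ lam / 4)
    (hle : lassoObj Γ γ lam βhat ≤ lassoObj Γ γ lam βstar) :
    (βhat - βstar) ⬝ᵥ Γ *ᵥ (βhat - βstar) ≤ lam / 2 * l1 (βhat - βstar)
      + 2 * lam * (∑ i ∈ S, |(βhat - βstar) i| - ∑ i ∈ Sᶜ, |(βhat - βstar) i|) := by
  have hid := lassoObj_sub_lassoObj hΓ γ lam βhat βstar
  have hnoise := dotProduct_le_mul_l1 (u := γ - Γ *ᵥ βstar) horacle (βhat - βstar)
  have hdecomp := mul_le_mul_of_nonneg_left (l1_sub_l1_le_of_eq_zero_off hS βhat) hlam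
  linarith

lemma LowerRE.mul_e2_sq_le {α τ b lam : ℝ} (hRE : LowerRE Γ α τ) (hτ : 0 ≤ τ)
    (hlamτ : 4 * b * τ ≤ lam) {θ : Fin p → ℝ} (hθ : l1 θ ≤ 2 * b) :
    α * e2 θ ^ 2 ≤ θ ⬝ᵥ Γ *ᵥ θ + lam / 2 * l1 θ := by
  have hθ_nonneg := l1_nonneg θ
  have htol : τ * l1 θ ^ 2 ≤ lam / 2 * l1 θ := calc
    τ * l1 θ ^ 2 = τ * l1 θ * l1 θ := by ring
    _ ≤ τ * l1 θ * (2 * b) := by gcongr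
    _ = 2 * b * τ * l1 θ := by ring
    _ ≤ lam / 2 * l1 θ := by gcongr; linarith
  linarith [hRE θ]

end Lasso

theorem lasso_error_bounds_general
    (p : ℕ) (Γ : Matrix (Fin p) (Fin p) ℝ) (hΓ : Γ.IsSymm)
    (γ : Fin p → ℝ) (lam b₁ : ℝ) (hlam : 0 < lam)
    (βstar : Fin p → ℝ) (hβstar : l1 βstar ≤ b₁)
    (S : Finset (Fin p)) (hS : ∀ i, i ∈ S ↔ βstar i ≠ 0)
    (d₀ : ℕ) (hd₀ : S.card ≤ d₀)
    (βhat : Fin p → ℝ) (hβhat : l1 βhat ≤ b₁)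
    (hmin : ∀ β : Fin p → ℝ, l1 β ≤ b₁ → lassoObj Γ γ lam βhat ≤ lassoObj Γ γ lam β)
    (horacle : ∀ i, |γ i - Γ.mulVec βstar i| ≤ lam / 4)
    (α τ : ℝ) (hα : 0 < α) (hτ : 0 < τ)
    (hRE : LowerRE Γ α τ)
    (hlamtau : 4 * b₁ * τ ≤ lam) :
    e2 (βhat - βstar) ≤ 3 * lam * Real.sqrt d₀ / α ∧
    l1 (βhat - βstar) ≤ 4 * Real.sqrt d₀ * e2 (βhat - βstar) ∧
    4 * Real.sqrt d₀ * e2 (βhat - βstar) ≤ 12 * lam * d₀ / α := by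
  have hbasic := lasso_basic_inequality hΓ hlam.le (fun i hi => not_not.1 (mt (hS i).2 hi))
    horacle (hmin βstar hβstar)
  set Δ := βhat - βstar
  set A := ∑ i ∈ S, |Δ i|
  set B := ∑ i ∈ Sᶜ, |Δ i|
  have hL : l1 Δ = A + B := l1_eq_sum_add_sum_compl S Δ
  have hB_nonneg : 0 ≤ B := sum_nonneg fun i _ => abs_nonneg (Δ i)
  have hA : A ≤ √d₀ * e2 Δ :=
    (sum_abs_le_sqrt_card_mul_e2 S Δ).trans (by gcongr; exact e2_nonneg Δ)
  have hcurv := hRE.mul_e2_sq_le hτ.le hlamtau (b := b₁) (θ := Δ)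
    ((l1_sub_le βhat βstar).trans (by linarith))
  have hkey : α * e2 Δ ^ 2 ≤ 3 * lam * A - lam * B := by
    rw [hL] at hbasic hcurv
    linarith
  have hα_sq : 0 ≤ α * e2 Δ ^ 2 := by positivity
  have hcone : B ≤ 3 * A := le_of_mul_le_mul_left (by linarith) hlam
  have hE : e2 Δ ≤ 3 * lam * √d₀ / α := by
    refine le_div_of_mul_sq_le_mul hα (by positivity) (e2_nonneg Δ) ?_
    calc α * e2 Δ ^ 2 ≤ 3 * lam * A := by linarith [mul_nonneg hlam.le hB_nonneg]
      _ ≤ 3 * lam * (√d₀ * e2 Δ) := by gcongr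
      _ = 3 * lam * √d₀ * e2 Δ := by ring
  refine ⟨hE, by linarith, ?_⟩
  calc 4 * √d₀ * e2 Δ ≤ 4 * √d₀ * (3 * lam * √d₀ / α) := by gcongr
    _ = 12 * lam * d₀ / α := by
      linear_combination (12 * lam / α) * mul_self_sqrt (Nat.cast_nonneg (α := ℝ) d₀)

/-- Lemma: ℓ₂ and ℓ₁ error bounds for the constrained Lasso. -/
theorem lasso_error_bounds
    (p : ℕ) (Γ : Matrix (Fin p) (Fin p) ℝ) (hΓ : Γ.IsSymm)
    (γ : Fin p → ℝ) (lam b₁ : ℝ) (hlam : 0 < lam) (hb₁ : 0 < b₁)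
    (βstar : Fin p → ℝ) (hβstar : l1 βstar ≤ b₁)
    (S : Finset (Fin p)) (hS : ∀ i, i ∈ S ↔ βstar i ≠ 0)
    (d₀ : ℕ) (hd₀ : S.card ≤ d₀)
    (βhat : Fin p → ℝ) (hβhat : l1 βhat ≤ b₁)
    (hmin : ∀ β : Fin p → ℝ, l1 β ≤ b₁ → lassoObj Γ γ lam βhat ≤ lassoObj Γ γ lam β)
    (horacle : ∀ i, |γ i - Γ.mulVec βstar i| ≤ lam / 4)
    (α τ : ℝ) (hα : 0 < α) (hτ : 0 < τ)
    (hRE : LowerRE Γ α τ)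
    (hlamtau : 4 * b₁ * τ ≤ lam)
    (hd₀τ : 16 * d₀ * τ ≤ (2 / 15) * α) :
    e2 (βhat - βstar) ≤ 3 * lam * Real.sqrt d₀ / α ∧
    l1 (βhat - βstar) ≤ 4 * Real.sqrt d₀ * e2 (βhat - βstar) ∧
    4 * Real.sqrt d₀ * e2 (βhat - βstar) ≤ 12 * lam * d₀ / α :=
  lasso_error_bounds_general p Γ hΓ γ lam b₁ hlam βstar hβstar S hS d₀ hd₀ βhat hβhat hmin horacle α
    τ hα hτ hRE hlamtau
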